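/- Let (L,·) be a loop, A(L) a subgroup of its automorphism group, and H(L) the A(L)-holomorph of (L,·). If H(L) is an Osborn loop, then for all x, y ∈ L and all φ ∈ A(L): (y/x)·φ⁻¹(x) = y·(x^λ·φ⁻¹(x)) = x·(((x\y)/x)·φ⁻¹(x)), and moreover x^λ·φ⁻¹(x) = x·((x^ρ/x)·φ⁻¹(x)). -/

import Mathlib

/-- A loop: a set with multiplication, left and right division, and a
two-sided identity element, such that all translations are bijections
(expressed via the division operations). -/
structure Loop (L : Type*) where
  mul : L → L → L
  ldiv : L → L → L
  rdiv : L → L → L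
  e : L
  mul_ldiv : ∀ x y, mul x (ldiv x y) = y
  ldiv_mul : ∀ x y, ldiv x (mul x y) = y
  rdiv_mul : ∀ x y, mul (rdiv y x) x = y
  mul_rdiv : ∀ x y, rdiv (mul y x) x = y
  e_mul : ∀ x, mul e x = x
  mul_e : ∀ x, mul x e = x

namespace Loop

variable {L : Type*} (Q : Loop L)

/-- The left inverse `x^λ`, the unique element with `x^λ · x = e`. -/
def linv (x : L) : L := Q.rdiv Q.e x

/-- The right inverse `x^ρ`, the unique element with `x · x^ρ = e`. -/
def rinv (x : L) : L := Q.ldiv x Q.e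

/-- A loop is Osborn if `x·((y·z)·x) = (x·((y·x^λ)·x))·(z·x)` for all `x,y,z`. -/
def IsOsborn : Prop :=
  ∀ x y z, Q.mul x (Q.mul (Q.mul y z) x) =
    Q.mul (Q.mul x (Q.mul (Q.mul y (Q.linv x)) x)) (Q.mul z x)

/-- The automorphism group of a loop, as a subgroup of the permutation group. -/
def autGroup : Subgroup (Equiv.Perm L) where
  carrier := {α | ∀ x y, α (Q.mul x y) = Q.mul (α x) (α y)}
  one_mem' := fun _ _ => rfl
  mul_mem' := by
    intro α β ha hb x y
    simp only [Equiv.Perm.mul_apply]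
    rw [hb x y, ha]
  inv_mem' := by
    intro α ha x y
    apply α.injective
    rw [ha]
    simp

theorem mem_autGroup_iff {α : Equiv.Perm L} :
    α ∈ Q.autGroup ↔ ∀ x y, α (Q.mul x y) = Q.mul (α x) (α y) := Iff.rfl

theorem aut_fix_e {α : Equiv.Perm L} (hα : α ∈ Q.autGroup) : α Q.e = Q.e := by
  have h1 : α (Q.mul Q.e Q.e) = Q.mul (α Q.e) (α Q.e) := hα Q.e Q.e
  rw [Q.mul_e] at h1
  have h2 : Q.mul (α Q.e) (α Q.e) = Q.mul (α Q.e) Q.e := by rw [Q.mul_e, ← h1]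
  have h3 := congrArg (Q.ldiv (α Q.e)) h2
  rwa [Q.ldiv_mul, Q.ldiv_mul] at h3

/-- The `A`-holomorph of a loop `(L,·)`: the loop on `A × L` with multiplication
`(α,x)∘(β,y) = (α∘β, β(x)·y)`, where `A` is a subgroup of the automorphism group. -/
def Holomorph (A : Subgroup (Equiv.Perm L)) (hA : A ≤ Q.autGroup) : Loop (A × L) where
  mul p q := (p.1 * q.1, Q.mul ((q.1 : Equiv.Perm L) p.2) q.2)
  ldiv p r := (p.1⁻¹ * r.1, Q.ldiv (((p.1⁻¹ * r.1 : A) : Equiv.Perm L) p.2) r.2)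
  rdiv r q := (r.1 * q.1⁻¹, ((q.1⁻¹ : A) : Equiv.Perm L) (Q.rdiv r.2 q.2))
  e := (1, Q.e)
  mul_ldiv p r := by
    refine Prod.ext ?_ ?_
    · simp
    · simp [Q.mul_ldiv]
  ldiv_mul p q := by
    refine Prod.ext ?_ ?_
    · simp
    · simp [inv_mul_cancel_left, Q.ldiv_mul]
  rdiv_mul r q := by
    refine Prod.ext ?_ ?_
    · simp
    · simp [Q.rdiv_mul]
  mul_rdiv p q := by
    refine Prod.ext ?_ ?_
    · simp
    · simp [Q.mul_rdiv]
  e_mul p := by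
    refine Prod.ext ?_ ?_
    · simp
    · simp [Q.aut_fix_e (hA p.1.2), Q.e_mul]
  mul_e p := by
    refine Prod.ext ?_ ?_
    · simp
    · simp [Q.mul_e]

/-- A triple `(A,B,C)` of bijections of `L` is an autotopism of `(L,·)` if
`A(x)·B(y) = C(x·y)` for all `x, y`. -/
def IsAutotopism (A B C : L → L) : Prop :=
  Function.Bijective A ∧ Function.Bijective B ∧ Function.Bijective C ∧
    ∀ x y, Q.mul (A x) (B y) = C (Q.mul x y)

/-- A bijection `U` is ρ-regular if `(I,U,U)` is an autotopism. -/
def IsRhoRegular (U : L → L) : Prop := Q.IsAutotopism id U U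

/-- A bijection `U` is λ-regular if `(U,I,U)` is an autotopism. -/
def IsLambdaRegular (U : L → L) : Prop := Q.IsAutotopism U id U

/-- `U'` is an adjoint of the bijection `U` if `(U, U'⁻¹, I)` is an autotopism. -/
def IsMuAdjoint (U U' : L → L) : Prop :=
  letI : Nonempty L := ⟨Q.e⟩
  Function.Bijective U' ∧ Q.IsAutotopism U (Function.invFun U') id

/-- `U` is μ-regular if it has an adjoint, i.e. `(U, U'⁻¹, I)` is an
autotopism for some bijection `U'`. The μ-regular bijections form `Φ(L,·)`. -/
def IsMuRegular (U : L → L) : Prop := ∃ U', Q.IsMuAdjoint U U'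

/-- `U'` belongs to `Ψ(L,·)`, the group of adjoints of μ-regular bijections. -/
def IsPsi (U' : L → L) : Prop := ∃ U, Q.IsMuAdjoint U U'

/-- Membership in the left nucleus `N_λ`. -/
def InNlambda (a : L) : Prop := ∀ y z, Q.mul a (Q.mul y z) = Q.mul (Q.mul a y) z

/-- Membership in the middle nucleus `N_μ`. -/
def InNmu (a : L) : Prop := ∀ y z, Q.mul (Q.mul y a) z = Q.mul y (Q.mul a z)

/-- Membership in the right nucleus `N_ρ`. -/
def InNrho (a : L) : Prop := ∀ y z, Q.mul (Q.mul y z) a = Q.mul y (Q.mul z a)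

/-- Membership in the nucleus `N = N_λ ∩ N_μ ∩ N_ρ`. -/
def InNucleus (a : L) : Prop := Q.InNlambda a ∧ Q.InNmu a ∧ Q.InNrho a

/-- Membership in the center `Z = N ∩ C`. -/
def InCenter (a : L) : Prop := Q.InNucleus a ∧ ∀ x, Q.mul a x = Q.mul x a

end Loop

/-!
Placing the automorphism `φ` in the third factor of the Osborn identity of the holomorph gives
the twisted identity `x·((y·z)·a) = (x·((y·x^λ)·x))·(z·a)` for `a = φ⁻¹(x)`; for `φ = 1` it says
that `L` is Osborn, so that `x·((y·x^λ)·x) = (x·(y·x))/x`. Hence `x·(y·a) = ((x·(y·x))/x)·a`, and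
since every `u` is of the form `(x·(y·x))/x`, all three equalities follow.
-/

namespace Loop

variable {L : Type*} {Q : Loop L}

theorem map_linv {σ : Equiv.Perm L} (hσ : σ ∈ Q.autGroup) (x : L) :
    σ (Q.linv x) = Q.linv (σ x) := by
  have h : Q.mul (σ (Q.linv x)) (σ x) = Q.e := by
    rw [← hσ, linv, Q.rdiv_mul, Q.aut_fix_e hσ]
  rw [← Q.mul_rdiv (σ x) (σ (Q.linv x)), h]
  rfl

theorem IsOsborn.mul_mul_linv_mul_eq_rdiv (hQ : Q.IsOsborn) (x y : L) :
    Q.mul x (Q.mul (Q.mul y (Q.linv x)) x) = Q.rdiv (Q.mul x (Q.mul y x)) x := by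
  have h := hQ x y Q.e
  rw [Q.mul_e, Q.e_mul] at h
  rw [h, Q.mul_rdiv]

section Twisted

variable {x a : L} (hQ : Q.IsOsborn)
  (htw : ∀ y z, Q.mul x (Q.mul (Q.mul y z) a) =
    Q.mul (Q.mul x (Q.mul (Q.mul y (Q.linv x)) x)) (Q.mul z a))
include hQ htw

theorem mul_mul_eq_rdiv_mul (y : L) :
    Q.mul x (Q.mul y a) = Q.mul (Q.rdiv (Q.mul x (Q.mul y x)) x) a := by
  simpa only [Q.mul_e, Q.e_mul, hQ.mul_mul_linv_mul_eq_rdiv] using htw y Q.e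

theorem rdiv_mul_eq_mul_linv_mul (u : L) :
    Q.mul (Q.rdiv u x) a = Q.mul u (Q.mul (Q.linv x) a) := by
  set y := Q.rdiv (Q.ldiv x (Q.mul u x)) x
  have hy : Q.rdiv (Q.mul x (Q.mul y x)) x = u := by
    rw [Q.rdiv_mul, Q.mul_ldiv, Q.mul_rdiv]
  calc Q.mul (Q.rdiv u x) a
      = Q.mul (Q.rdiv (Q.mul x (Q.mul (Q.mul y (Q.linv x)) x)) x) a := by
        rw [hQ.mul_mul_linv_mul_eq_rdiv, hy]
    _ = Q.mul x (Q.mul (Q.mul y (Q.linv x)) a) := (mul_mul_eq_rdiv_mul hQ htw _).symm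
    _ = Q.mul u (Q.mul (Q.linv x) a) := by
        rw [htw, hQ.mul_mul_linv_mul_eq_rdiv, hy]

theorem mul_rdiv_ldiv_mul_eq_rdiv_mul (y : L) :
    Q.mul x (Q.mul (Q.rdiv (Q.ldiv x y) x) a) = Q.mul (Q.rdiv y x) a := by
  rw [mul_mul_eq_rdiv_mul hQ htw, Q.rdiv_mul, Q.mul_ldiv]

end Twisted

section Holomorph

variable {A : Subgroup (Equiv.Perm L)} {hA : A ≤ Q.autGroup}

@[simp]
theorem holomorph_mul (p q : A × L) :
    (Q.Holomorph A hA).mul p q = (p.1 * q.1, Q.mul ((q.1 : Equiv.Perm L) p.2) q.2) :=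
  rfl

@[simp]
theorem holomorph_linv (p : A × L) :
    (Q.Holomorph A hA).linv p = (p.1⁻¹, ((p.1⁻¹ : A) : Equiv.Perm L) (Q.linv p.2)) := by
  ext <;> simp [Holomorph, linv]

theorem IsOsborn.holomorph_twisted (h : (Q.Holomorph A hA).IsOsborn) (φ : A) (x y z : L) :
    Q.mul x (Q.mul (Q.mul y z) (((φ⁻¹ : A) : Equiv.Perm L) x)) =
      Q.mul (Q.mul x (Q.mul (Q.mul y (Q.linv x)) x)) (Q.mul z (((φ⁻¹ : A) : Equiv.Perm L) x)) := by
  have hφ : ∀ u v, (φ : Equiv.Perm L) (Q.mul u v) =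
      Q.mul ((φ : Equiv.Perm L) u) ((φ : Equiv.Perm L) v) := hA φ.2
  have H := congrArg Prod.snd
    (h (1, ((φ⁻¹ : A) : Equiv.Perm L) x) (1, ((φ⁻¹ : A) : Equiv.Perm L) y) (φ, z))
  simpa [hφ, map_linv (hA φ.2)] using H

theorem IsOsborn.of_holomorph (h : (Q.Holomorph A hA).IsOsborn) : Q.IsOsborn :=
  fun x y z => by simpa using h.holomorph_twisted 1 x y z

end Holomorph

end Loop

/-- If `H(L)` is an Osborn loop, then for all `x, y ∈ L` and all
`φ ∈ A(L)`: `(y/x)·φ⁻¹(x) = y·(x^λ·φ⁻¹(x)) = x·(((x\y)/x)·φ⁻¹(x))` and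
`x^λ·φ⁻¹(x) = x·((x^ρ/x)·φ⁻¹(x))`. -/
theorem holomorph_osborn_right_translation_eq {L : Type*} (Q : Loop L)
    (A : Subgroup (Equiv.Perm L)) (hA : A ≤ Q.autGroup) :
    (Q.Holomorph A hA).IsOsborn →
      ∀ (x y : L) (φ : A),
        Q.mul (Q.rdiv y x) (((φ⁻¹ : A) : Equiv.Perm L) x) = Q.mul y (Q.mul (Q.linv x) (((φ⁻¹ : A) : Equiv.Perm L) x)) ∧
        Q.mul y (Q.mul (Q.linv x) (((φ⁻¹ : A) : Equiv.Perm L) x)) = Q.mul x (Q.mul (Q.rdiv (Q.ldiv x y) x) (((φ⁻¹ : A) : Equiv.Perm L) x)) ∧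
        (Q.mul (Q.linv x) (((φ⁻¹ : A) : Equiv.Perm L) x)) = Q.mul x (Q.mul (Q.rdiv (Q.rinv x) x) (((φ⁻¹ : A) : Equiv.Perm L) x)) := by
  intro h x y φ
  have hQ := h.of_holomorph
  have htw := h.holomorph_twisted φ x
  have middle : ∀ w, Q.mul w (Q.mul (Q.linv x) (((φ⁻¹ : A) : Equiv.Perm L) x)) =
      Q.mul x (Q.mul (Q.rdiv (Q.ldiv x w) x) (((φ⁻¹ : A) : Equiv.Perm L) x)) := fun w =>
    (Loop.rdiv_mul_eq_mul_linv_mul hQ htw w).symm.trans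
      (Loop.mul_rdiv_ldiv_mul_eq_rdiv_mul hQ htw w).symm
  refine ⟨Loop.rdiv_mul_eq_mul_linv_mul hQ htw y, middle y, ?_⟩
  simpa only [Q.e_mul, Loop.rinv] using middle Q.e
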